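/- Let k be a field of characteristic 2 and s = Σ_{i≥0}(t³+t⁴)^{2^i}. Then (t³+t⁴) + Σ_{i≥1}(t³(1+t))^{2^i} = s, and consequently t/(1+t) + (t³+t⁴)/(1+t)² + (Σ_{i≥1}(t³(1+t))^{2^i})/(1+t)² equals the series t + t² + Σ_{j≥0} Σ_{ℓ=0}^{2^j−1} t^{6·2^j+2ℓ}, using that (1+t)^{2^i} = 1 + t^{2^i} in characteristic 2. -/

import Mathlib

open PowerSeries
noncomputable section

variable (k : Type*) [Field k]

/-- The power series `s = Σ_{i≥0} (t³+t⁴)^{2^i}` in `k[[t]]`, given coefficientwise. -/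
def paperS : PowerSeries k :=
  PowerSeries.mk fun n =>
    ∑ i ∈ Finset.range (n + 1), PowerSeries.coeff (R := k) n ((X ^ 3 + X ^ 4) ^ 2 ^ i)

/-- The `t`-adically convergent tail `Σ_{i≥1} (t³(1+t))^{2^i}`, given coefficientwise. -/
def tailS : PowerSeries k :=
  PowerSeries.mk fun n =>
    ∑ i ∈ Finset.Icc 1 n, PowerSeries.coeff (R := k) n ((X ^ 3 * (1 + X)) ^ 2 ^ i)

/-- The `t`-adically convergent double sum `Σ_{j≥0} Σ_{ℓ=0}^{2^j-1} t^{6·2^j+2ℓ}`, given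
coefficientwise. -/
def phiTail : PowerSeries k :=
  PowerSeries.mk fun n =>
    ∑ j ∈ Finset.range (n + 1), ∑ l ∈ Finset.range (2 ^ j),
      if n = 6 * 2 ^ j + 2 * l then (1 : k) else 0

/-! In characteristic 2 the Frobenius gives `(t³(1+t))^{2^i} = t^{3·2^i}(1 + t^{2^i})`, and the
`j`-th block `Σ_{ℓ<2^j} t^{6·2^j+2ℓ} = t^{6·2^j} Σ_{ℓ<2^j} (t²)^ℓ` of `phiTail`, multiplied by
`(1+t)² = 1+t²`, telescopes to `t^{6·2^j}(1 + t^{2^{j+1}}) = (t³(1+t))^{2^{j+1}}`. Summing over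
`j` gives `tailS = phiTail · (1+t)²`, from which the second identity is algebra in `k[[t]]`.

The coefficientwise definitions become genuine sums once `k` carries the discrete topology:
`paperS`, `tailS` and `phiTail` are then the sums of their terms in the coefficientwise topology,
and the identities follow from uniqueness of limits and continuity of multiplication. -/

open scoped PowerSeries.WithPiTopology

instance PowerSeries.instCharP {R : Type*} [Semiring R] (p : ℕ) [CharP R p] : CharP R⟦X⟧ p :=
  charP_of_injective_ringHom C_injective p

theorem PowerSeries.hasSum_mk_sum_coeff {R ι : Type*} [Semiring R] [TopologicalSpace R]
    (f : ι → R⟦X⟧) (s : ℕ → Finset ι) (hs : ∀ n, ∀ i ∉ s n, coeff n (f i) = 0) :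
    HasSum f (mk fun n => ∑ i ∈ s n, coeff n (f i)) := by
  rw [WithPiTopology.hasSum_iff_hasSum_coeff]
  intro n
  rw [coeff_mk]
  exact hasSum_sum_of_ne_finset_zero (hs n)

theorem PowerSeries.coeff_X_pow_mul_pow_of_lt {R : Type*} [CommSemiring R] {n d m : ℕ}
    (h : n < d * m) (p : R⟦X⟧) : coeff n ((X ^ d * p) ^ m) = 0 := by
  rw [mul_pow, ← pow_mul, coeff_X_pow_mul', if_neg h.not_ge]

def phiBlock (j : ℕ) : k⟦X⟧ := ∑ l ∈ Finset.range (2 ^ j), X ^ (6 * 2 ^ j + 2 * l)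

section HasSum

variable [TopologicalSpace k]

theorem hasSum_paperS : HasSum (fun i => (X ^ 3 + X ^ 4 : k⟦X⟧) ^ 2 ^ i) (paperS k) := by
  refine hasSum_mk_sum_coeff _ _ fun n i hi => ?_
  rw [Finset.mem_range, not_lt] at hi
  rw [show (X ^ 3 + X ^ 4 : k⟦X⟧) = X ^ 3 * (1 + X) by ring]
  exact coeff_X_pow_mul_pow_of_lt (by have := i.lt_two_pow_self; omega) _

theorem hasSum_tailS : HasSum (fun i => (X ^ 3 * (1 + X) : k⟦X⟧) ^ 2 ^ (i + 1)) (tailS k) := by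
  have tailS_eq : tailS k = mk fun n =>
      ∑ i ∈ Finset.range n, coeff n ((X ^ 3 * (1 + X) : k⟦X⟧) ^ 2 ^ (i + 1)) := by
    ext n
    rw [tailS, coeff_mk, coeff_mk, Finset.range_eq_Ico,
      Finset.sum_Ico_add' (fun i => coeff n ((X ^ 3 * (1 + X) : k⟦X⟧) ^ 2 ^ i)),
      zero_add, Finset.Ico_add_one_right_eq_Icc]
  rw [tailS_eq]
  refine hasSum_mk_sum_coeff _ _ fun n i hi => ?_
  rw [Finset.mem_range, not_lt] at hi
  exact coeff_X_pow_mul_pow_of_lt (by have := (i + 1).lt_two_pow_self; omega) _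

theorem hasSum_phiTail : HasSum (phiBlock k) (phiTail k) := by
  have phiTail_eq : phiTail k =
      mk fun n => ∑ j ∈ Finset.range (n + 1), coeff n (phiBlock k j) := by
    ext n
    simp only [phiTail, phiBlock, coeff_mk, map_sum, coeff_X_pow]
  rw [phiTail_eq]
  refine hasSum_mk_sum_coeff _ _ fun n j hj => ?_
  rw [Finset.mem_range, not_lt] at hj
  have := j.lt_two_pow_self
  simp only [phiBlock, map_sum, coeff_X_pow]
  exact Finset.sum_eq_zero fun l _ => if_neg (by omega)

end HasSum

theorem phiBlock_mul_one_add_X_sq [CharP k 2] (j : ℕ) :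
    phiBlock k j * (1 + X) ^ 2 = (X ^ 3 * (1 + X) : k⟦X⟧) ^ 2 ^ (j + 1) := by
  have block :
      phiBlock k j = X ^ (6 * 2 ^ j) * ∑ l ∈ Finset.range (2 ^ j), (X ^ 2 : k⟦X⟧) ^ l := by
    simp only [phiBlock, Finset.mul_sum, ← pow_mul, ← pow_add]
  have geom : (∑ l ∈ Finset.range (2 ^ j), (X ^ 2 : k⟦X⟧) ^ l) * (1 + X) ^ 2
      = 1 + X ^ 2 ^ (j + 1) := by
    have := geom_sum_mul (X ^ 2 : k⟦X⟧) (2 ^ j)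
    rw [CharTwo.sub_eq_add, CharTwo.sub_eq_add] at this
    rw [CharTwo.add_sq, one_pow, add_comm, this, ← pow_mul, ← pow_succ', add_comm]
  have frob : (1 + X : k⟦X⟧) ^ 2 ^ (j + 1) = 1 + X ^ 2 ^ (j + 1) := by
    rw [add_pow_char_pow, one_pow]
  rw [block, mul_assoc, geom, ← frob, mul_pow, ← pow_mul, pow_succ]
  ring

theorem add_tailS_eq_paperS : (X ^ 3 + X ^ 4 : k⟦X⟧) + tailS k = paperS k := by
  let _ : TopologicalSpace k := ⊥
  have : DiscreteTopology k := ⟨rfl⟩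
  have h := (hasSum_nat_add_iff' 1).2 (hasSum_paperS k)
  rw [show (X ^ 3 + X ^ 4 : k⟦X⟧) = X ^ 3 * (1 + X) by ring] at h
  rw [(hasSum_tailS k).unique h, Finset.sum_range_one]
  ring

theorem tailS_eq_phiTail_mul [CharP k 2] : tailS k = phiTail k * (1 + X) ^ 2 := by
  let _ : TopologicalSpace k := ⊥
  have : DiscreteTopology k := ⟨rfl⟩
  have h := (hasSum_phiTail k).mul_right ((1 + X : k⟦X⟧) ^ 2)
  rw [funext (phiBlock_mul_one_add_X_sq k)] at h
  exact (hasSum_tailS k).unique h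

/-- for `k` of characteristic 2 and `s = Σ_{i≥0}(t³+t⁴)^{2^i}`, one has
`(t³+t⁴) + Σ_{i≥1}(t³(1+t))^{2^i} = s`, and consequently
`t/(1+t) + (t³+t⁴)/(1+t)² + (Σ_{i≥1}(t³(1+t))^{2^i})/(1+t)²
  = t + t² + Σ_{j≥0} Σ_{ℓ=0}^{2^j−1} t^{6·2^j+2ℓ}`. -/
theorem tail_decomposition [CharP k 2] :
    (X ^ 3 + X ^ 4 : PowerSeries k) + tailS k = paperS k ∧
      X * (1 + X : PowerSeries k)⁻¹ +
          (X ^ 3 + X ^ 4 : PowerSeries k) * (((1 + X : PowerSeries k) ^ 2)⁻¹) +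
          tailS k * (((1 + X : PowerSeries k) ^ 2)⁻¹) =
        X + X ^ 2 + phiTail k := by
  have hinv : (1 + X : k⟦X⟧) * (1 + X)⁻¹ = 1 := PowerSeries.mul_inv_cancel _ (by simp)
  have two : (2 : k⟦X⟧) = 0 := CharTwo.two_eq_zero
  refine ⟨add_tailS_eq_paperS k, ?_⟩
  rw [sq, PowerSeries.mul_inv_rev, tailS_eq_phiTail_mul k]
  linear_combination
    (phiTail k * ((1 + X) * (1 + X)⁻¹ + 1) + X ^ 3 * (1 + X)⁻¹ + X * (1 + X)) * hinv
      - X ^ 2 * (1 + X)⁻¹ * two
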